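/- Let n, N, K be positive integers. Let z_1, …, z_K ∈ ℂ^n \ {0} be a frame for ℂ^n with lower frame bound A_K and upper frame bound B_K, let y_1, …, y_N ∈ ℂ^n \ {0}, and suppose there exists j₀ ∈ {1, …, N} such that m_y := min_{1 ≤ i ≤ n} |y_{j₀}(i)| > 0. Define x_{j,k} := y_j ⊙ z_k for 1 ≤ j ≤ N, 1 ≤ k ≤ K. Then for every x ∈ ℂ^n, m_y²·A_K·‖x‖² ≤ Σ_{j=1}^N Σ_{k=1}^K |⟨x, x_{j,k}⟩|² ≤ N·B_K·(max_{1 ≤ j ≤ N} ‖y_j‖_∞²)·‖x‖². In particular, X = {x_{j,k} : 1 ≤ j ≤ N, 1 ≤ k ≤ K} is a multiplicative frame for ℂ^n. -/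

import Mathlib

/-!
Since `⟪x, y ⊙ z⟫ = ⟪conj y ⊙ x, z⟫`, the frame sum of the family `(y j ⊙ z k)ₖ` at `x` is the
frame sum of `z` at `conj (y j) ⊙ x`, and `‖conj (y j) ⊙ x‖` lies between `min_i |y j i| ‖x‖`
and `max_i |y j i| ‖x‖`. The lower bound thus comes from the single index `j₀`, the upper one
from summing over all `j`. A positive lower frame bound forces spanning: a vector orthogonal
to the whole family has frame sum zero.
-/

open scoped InnerProductSpace

variable {𝕜 ι : Type*} [RCLike 𝕜]

def hadamardMul (a : ι → 𝕜) (x : EuclideanSpace 𝕜 ι) : EuclideanSpace 𝕜 ι :=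
  WithLp.toLp 2 fun i => a i * x i

@[simp]
theorem hadamardMul_apply (a : ι → 𝕜) (x : EuclideanSpace 𝕜 ι) (i : ι) :
    hadamardMul a x i = a i * x i := rfl

variable [Fintype ι]

theorem inner_hadamardMul_right (a : ι → 𝕜) (x z : EuclideanSpace 𝕜 ι) :
    ⟪x, hadamardMul a z⟫_𝕜 = ⟪hadamardMul (star a) x, z⟫_𝕜 := by
  simp only [PiLp.inner_apply, hadamardMul_apply, RCLike.inner_apply, Pi.star_apply, map_mul,
    RCLike.star_def, RCLike.conj_conj]
  exact Finset.sum_congr rfl fun i _ => by ring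

theorem norm_sq_hadamardMul (a : ι → 𝕜) (x : EuclideanSpace 𝕜 ι) :
    ‖hadamardMul a x‖ ^ 2 = ∑ i, ‖a i‖ ^ 2 * ‖x i‖ ^ 2 := by
  simp only [EuclideanSpace.norm_sq_eq, hadamardMul_apply, norm_mul, mul_pow]

theorem mul_norm_sq_le_norm_sq_hadamardMul {a : ι → 𝕜} {m : ℝ} (h : ∀ i, m ≤ ‖a i‖ ^ 2)
    (x : EuclideanSpace 𝕜 ι) : m * ‖x‖ ^ 2 ≤ ‖hadamardMul a x‖ ^ 2 := by
  rw [norm_sq_hadamardMul, EuclideanSpace.norm_sq_eq, Finset.mul_sum]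
  gcongr with i
  exact h i

theorem norm_sq_hadamardMul_le {a : ι → 𝕜} {M : ℝ} (h : ∀ i, ‖a i‖ ^ 2 ≤ M)
    (x : EuclideanSpace 𝕜 ι) : ‖hadamardMul a x‖ ^ 2 ≤ M * ‖x‖ ^ 2 := by
  rw [norm_sq_hadamardMul, EuclideanSpace.norm_sq_eq, Finset.mul_sum]
  gcongr with i
  exact h i

theorem span_range_eq_top_of_lower_frame_bound {E κ : Type*} [NormedAddCommGroup E]
    [InnerProductSpace 𝕜 E] [Fintype κ] (v : κ → E) {A : ℝ} (hA : 0 < A)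
    (h : ∀ x, A * ‖x‖ ^ 2 ≤ ∑ k, ‖⟪x, v k⟫_𝕜‖ ^ 2) :
    Submodule.span 𝕜 (Set.range v) = ⊤ := by
  have := FiniteDimensional.span_of_finite 𝕜 (Set.finite_range v)
  rw [← Submodule.orthogonal_eq_bot_iff, Submodule.eq_bot_iff]
  intro x hx
  have horth : ∀ k, ⟪x, v k⟫_𝕜 = 0 := fun k =>
    Submodule.inner_left_of_mem_orthogonal (Submodule.subset_span (Set.mem_range_self k)) hx
  have hsum : A * ‖x‖ ^ 2 ≤ 0 := by simpa [horth] using h x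
  simpa using nonpos_of_mul_nonpos_right hsum hA

section FrameBounds

variable {η κ : Type*} [Fintype η] [Fintype κ] (y : η → EuclideanSpace 𝕜 ι)
  (z : κ → EuclideanSpace 𝕜 ι)

theorem mul_le_sum_sum_norm_inner_hadamardMul_sq {A m : ℝ} (hA : 0 ≤ A)
    (hz : ∀ x, A * ‖x‖ ^ 2 ≤ ∑ k, ‖⟪x, z k⟫_𝕜‖ ^ 2) (j₀ : η) (hy : ∀ i, m ≤ ‖y j₀ i‖ ^ 2)
    (x : EuclideanSpace 𝕜 ι) :
    m * A * ‖x‖ ^ 2 ≤ ∑ j, ∑ k, ‖⟪x, hadamardMul (y j) (z k)⟫_𝕜‖ ^ 2 := by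
  simp only [inner_hadamardMul_right]
  calc m * A * ‖x‖ ^ 2 = A * (m * ‖x‖ ^ 2) := by ring
    _ ≤ A * ‖hadamardMul (star ⇑(y j₀)) x‖ ^ 2 := by
      gcongr
      exact mul_norm_sq_le_norm_sq_hadamardMul (fun i => by simpa using hy i) x
    _ ≤ ∑ k, ‖⟪hadamardMul (star ⇑(y j₀)) x, z k⟫_𝕜‖ ^ 2 := hz _
    _ ≤ ∑ j, ∑ k, ‖⟪hadamardMul (star ⇑(y j)) x, z k⟫_𝕜‖ ^ 2 :=
      Finset.single_le_sum (f := fun j => ∑ k, ‖⟪hadamardMul (star ⇑(y j)) x, z k⟫_𝕜‖ ^ 2)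
        (fun j _ => by positivity) (Finset.mem_univ j₀)

theorem sum_sum_norm_inner_hadamardMul_sq_le {B M : ℝ} (hB : 0 ≤ B)
    (hz : ∀ x, ∑ k, ‖⟪x, z k⟫_𝕜‖ ^ 2 ≤ B * ‖x‖ ^ 2) (hy : ∀ j i, ‖y j i‖ ^ 2 ≤ M)
    (x : EuclideanSpace 𝕜 ι) :
    ∑ j, ∑ k, ‖⟪x, hadamardMul (y j) (z k)⟫_𝕜‖ ^ 2 ≤ Fintype.card η * B * M * ‖x‖ ^ 2 := by
  simp only [inner_hadamardMul_right]
  calc ∑ j, ∑ k, ‖⟪hadamardMul (star ⇑(y j)) x, z k⟫_𝕜‖ ^ 2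
      ≤ ∑ j, B * ‖hadamardMul (star ⇑(y j)) x‖ ^ 2 := Finset.sum_le_sum fun j _ => hz _
    _ ≤ ∑ _j : η, B * (M * ‖x‖ ^ 2) := by
      gcongr with j
      exact norm_sq_hadamardMul_le (fun i => by simpa using hy j i) x
    _ = Fintype.card η * B * M * ‖x‖ ^ 2 := by
      rw [Finset.sum_const, Finset.card_univ, nsmul_eq_mul]; ring

end FrameBounds

theorem multiplicative_frame_construction_b_general
    (n N K : ℕ)
    (y : Fin N → EuclideanSpace ℂ (Fin n))
    (z : Fin K → EuclideanSpace ℂ (Fin n))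
    (AK BK : ℝ) (hAK : 0 < AK) (hBK : 0 < BK)
    (hframe : ∀ x : EuclideanSpace ℂ (Fin n),
      AK * ‖x‖ ^ 2 ≤ ∑ k, ‖(inner ℂ x (z k) : ℂ)‖ ^ 2 ∧
      ∑ k, ‖(inner ℂ x (z k) : ℂ)‖ ^ 2 ≤ BK * ‖x‖ ^ 2)
    (j₀ : Fin N) (my : ℝ) (hmy : my = ⨅ i : Fin n, ‖y j₀ i‖) (hmypos : 0 < my)
    (X : Fin N → Fin K → EuclideanSpace ℂ (Fin n))
    (hX : ∀ j k i, X j k i = y j i * z k i) :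
    (∀ x : EuclideanSpace ℂ (Fin n),
      my ^ 2 * AK * ‖x‖ ^ 2 ≤ ∑ j, ∑ k, ‖(inner ℂ x (X j k) : ℂ)‖ ^ 2 ∧
      ∑ j, ∑ k, ‖(inner ℂ x (X j k) : ℂ)‖ ^ 2 ≤
        (N : ℝ) * BK * (⨆ j : Fin N, (⨆ i : Fin n, ‖y j i‖) ^ 2) * ‖x‖ ^ 2) ∧
    Submodule.span ℂ (Set.range fun p : Fin N × Fin K => X p.1 p.2) = ⊤ := by
  obtain rfl : X = fun j k => hadamardMul (y j) (z k) := by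
    ext j k i
    exact hX j k i
  have hmy_le : ∀ i, my ^ 2 ≤ ‖y j₀ i‖ ^ 2 := fun i =>
    pow_le_pow_left₀ hmypos.le (hmy ▸ ciInf_le (Set.finite_range _).bddBelow i) 2
  have hy_le : ∀ j i, ‖y j i‖ ^ 2 ≤ ⨆ j : Fin N, (⨆ i : Fin n, ‖y j i‖) ^ 2 := fun j i =>
    (pow_le_pow_left₀ (norm_nonneg _)
      (le_ciSup (f := fun i => ‖y j i‖) (Set.finite_range _).bddAbove i) 2).trans
      (le_ciSup (f := fun j => (⨆ i, ‖y j i‖) ^ 2) (Set.finite_range _).bddAbove j)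
  have hlower := mul_le_sum_sum_norm_inner_hadamardMul_sq y z hAK.le (fun x => (hframe x).1) j₀
    hmy_le
  refine ⟨fun x => ⟨hlower x, ?_⟩,
    span_range_eq_top_of_lower_frame_bound _ (A := my ^ 2 * AK) (by positivity) fun x => ?_⟩
  · simpa using sum_sum_norm_inner_hadamardMul_sq_le y z hBK.le (fun x => (hframe x).2) hy_le x
  · rw [Fintype.sum_prod_type]
    exact hlower x

/-- Theorem (A construction of multiplicative frames, part b):
If `z₁, …, z_K ∈ ℂⁿ \ {0}` is a frame for `ℂⁿ` with lower frame bound `A_K` and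
upper frame bound `B_K`, `y₁, …, y_N ∈ ℂⁿ \ {0}`, and some `y_{j₀}` has all
coordinates of modulus at least `m_y > 0`, then the pointwise products
`X j k = y j ⊙ z k` satisfy, for every `x ∈ ℂⁿ`,
`m_y² A_K ‖x‖² ≤ Σ_{j,k} |⟨x, X j k⟩|² ≤ N B_K (max_j ‖y j‖_∞²) ‖x‖²`;
in particular `X` is a (multiplicative) frame, i.e. it spans `ℂⁿ`. -/
theorem multiplicative_frame_construction_b
    (n N K : ℕ) (hn : 0 < n) (hN : 0 < N) (hK : 0 < K)
    (y : Fin N → EuclideanSpace ℂ (Fin n))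
    (z : Fin K → EuclideanSpace ℂ (Fin n))
    (hy0 : ∀ j, y j ≠ 0) (hz0 : ∀ k, z k ≠ 0)
    (AK BK : ℝ) (hAK : 0 < AK) (hBK : 0 < BK)
    (hframe : ∀ x : EuclideanSpace ℂ (Fin n),
      AK * ‖x‖ ^ 2 ≤ ∑ k, ‖(inner ℂ x (z k) : ℂ)‖ ^ 2 ∧
      ∑ k, ‖(inner ℂ x (z k) : ℂ)‖ ^ 2 ≤ BK * ‖x‖ ^ 2)
    (j₀ : Fin N) (my : ℝ) (hmy : my = ⨅ i : Fin n, ‖y j₀ i‖) (hmypos : 0 < my)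
    (X : Fin N → Fin K → EuclideanSpace ℂ (Fin n))
    (hX : ∀ j k i, X j k i = y j i * z k i) :
    (∀ x : EuclideanSpace ℂ (Fin n),
      my ^ 2 * AK * ‖x‖ ^ 2 ≤ ∑ j, ∑ k, ‖(inner ℂ x (X j k) : ℂ)‖ ^ 2 ∧
      ∑ j, ∑ k, ‖(inner ℂ x (X j k) : ℂ)‖ ^ 2 ≤
        (N : ℝ) * BK * (⨆ j : Fin N, (⨆ i : Fin n, ‖y j i‖) ^ 2) * ‖x‖ ^ 2) ∧
    Submodule.span ℂ (Set.range fun p : Fin N × Fin K => X p.1 p.2) = ⊤ :=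
  multiplicative_frame_construction_b_general n N K y z AK BK hAK hBK hframe j₀ my hmy hmypos X hX
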